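/- arXiv:1006.4928 — 4 statements merged into one kernel-verified Lean document; each statement's English description precedes it below -/
import Mathlib

section
/- Consider the splitting automaton on Z^d with d ≥ 1, background 1 − 1/(2d) ≤ h < 1 and initial mass n ≥ 1. Then the diamond D = {x ∈ ℝ^d : Σ_i |x_i| ≤ 1} is the limiting shape of the sets T_t with scaling function f(t) = 1/t: for every ε > 0 there exists t^ε such that for all t > t^ε, D_ε ⊆ (1/t)·(T_t + C) ⊆ D^ε. -/
open scoped BigOperators

/-- The nearest neighbor of `x ∈ ℤ^d` obtained by shifting coordinate `i` by `ε`. -/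
def nbr {d : ℕ} (x : Fin d → ℤ) (i : Fin d) (ε : ℤ) : Fin d → ℤ :=
  Function.update x i (x i + ε)

/-- Nearest-neighbor adjacency in `ℤ^d`. -/
def Adj {d : ℕ} (x y : Fin d → ℤ) : Prop :=
  (∑ i, |x i - y i|) = 1

/-- The splitting model on `ℤ^d` with initial mass `n` at the origin and background
mass `h` at every other site, together with a splitting order: `S (t+1)` is the set
of sites that split at time `t+1` (a subset of the sites unstable at time `t`,
i.e. those of mass `≥ 1`), and the mass `η` evolves by Zhang's toppling rule:
a splitting site loses all its mass, distributing a fraction `1/(2d)` of it to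
each of its `2d` nearest neighbors. -/
structure SplittingModel (d : ℕ) (n h : ℝ) where
  η : ℕ → (Fin d → ℤ) → ℝ
  S : ℕ → Set (Fin d → ℤ)
  init_origin : η 0 0 = n
  init_other : ∀ x : Fin d → ℤ, x ≠ 0 → η 0 x = h
  S_zero : S 0 = ∅
  S_subset : ∀ t, S (t + 1) ⊆ {x | 1 ≤ η t x}
  evolve : ∀ t x, η (t + 1) x =
      (S (t + 1))ᶜ.indicator (η t) x
        + (1 / (2 * (d : ℝ))) * ∑ i : Fin d,
            ((S (t + 1)).indicator (η t) (nbr x i 1)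
              + (S (t + 1)).indicator (η t) (nbr x i (-1)))

namespace SplittingModel

variable {d : ℕ} {n h : ℝ}

/-- A valid splitting order: some unstable site splits whenever there is an unstable
site, and every site that is unstable at some time eventually splits. -/
def Valid (M : SplittingModel d n h) : Prop :=
  (∀ t, {x | 1 ≤ M.η t x}.Nonempty → (M.S (t + 1)).Nonempty) ∧
    (∀ t x, 1 ≤ M.η t x → ∃ t₀, 1 ≤ t₀ ∧ x ∈ M.S (t + t₀))

/-- The parallel splitting order (the splitting automaton): at every time step,
every unstable site splits. -/
def Parallel (M : SplittingModel d n h) : Prop :=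
  ∀ t, M.S (t + 1) = {x | 1 ≤ M.η t x}

/-- The set of sites that split at least once up to (and including) time `t`. -/
def Tt (M : SplittingModel d n h) (t : ℕ) : Set (Fin d → ℤ) :=
  ⋃ t' ∈ Set.Icc 1 t, M.S t'

/-- The set of sites that split at least once. -/
def T (M : SplittingModel d n h) : Set (Fin d → ℤ) :=
  ⋃ t, M.S t

/-- The model stabilizes: every site splits only finitely many times. -/
def Stabilizes (M : SplittingModel d n h) : Prop :=
  ∀ x, {t | x ∈ M.S t}.Finite

/-- The total mass `u x` emitted from the site `x` during stabilization. -/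
noncomputable def emit (M : SplittingModel d n h) (x : Fin d → ℤ) : ℝ :=
  ∑' t : ℕ, (M.S (t + 1)).indicator (M.η t) x

end SplittingModel

open scoped Pointwise

/-- The volume `V + C ⊆ ℝ^d`, where `C` is the cube of radius `1/2` centered at the
origin: the union of unit cubes centered at the points of `V ⊆ ℤ^d`. -/
def cubes {d : ℕ} (V : Set (Fin d → ℤ)) : Set (EuclideanSpace ℝ (Fin d)) :=
  {p | ∃ x ∈ V, ∀ i, |p i - (x i : ℝ)| ≤ 1 / 2}

/-- The inner `ε`-neighborhood `A_ε` of a set `A ⊆ ℝ^d`. -/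
noncomputable def innerNbhd {d : ℕ} (A : Set (EuclideanSpace ℝ (Fin d))) (ε : ℝ) :
    Set (EuclideanSpace ℝ (Fin d)) :=
  {p ∈ A | ε ≤ Metric.infDist p Aᶜ}

/-- The outer `ε`-neighborhood `A^ε` of a set `A ⊆ ℝ^d`. -/
noncomputable def outerNbhd {d : ℕ} (A : Set (EuclideanSpace ℝ (Fin d))) (ε : ℝ) :
    Set (EuclideanSpace ℝ (Fin d)) :=
  {p | Metric.infDist p A ≤ ε}

/-- The diamond `D = {x ∈ ℝ^d : ∑ i, |x i| ≤ 1}`. -/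
def Diamond (d : ℕ) : Set (EuclideanSpace ℝ (Fin d)) :=
  {p | (∑ i, |p i|) ≤ 1}

/-!
By induction on `t`, the automaton at time `t` carries the background mass `h` outside the
ℓ¹-ball of radius `t`, while inside it the sites whose ℓ¹-norm has the parity of `t` carry mass
at least `1` and the others carry nothing. Since `h < 1`, the sites splitting at time `t + 1` are
exactly the former; since `h ≥ 1 - 1/(2d)`, one share `1/(2d)` received from an inner neighbour
makes a site of the sphere of radius `t + 1` unstable, and an interior site receives at least
`2d` shares from its neighbours. Hence `T_t` is the lattice ℓ¹-ball `‖x‖₁ < t`, and the union of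
unit cubes around it, scaled by `1/t`, lies within `d/(2t)` of the diamond and contains every
point of the diamond at depth more than `d/t`.
-/

open Finset

def l1Norm {d : ℕ} (x : Fin d → ℤ) : ℤ := ∑ i, |x i|

lemma sum_abs_update {ι : Type*} [Fintype ι] [DecidableEq ι] {R : Type*}
    [AddCommGroup R] [LinearOrder R] [IsOrderedAddMonoid R] (x : ι → R) (i : ι) (b : R) :
    ∑ j, |Function.update x i b j| = ∑ j, |x j| - |x i| + |b| := by
  simp_rw [Function.apply_update (fun _ y => |y|)]
  rw [sum_update_of_mem (mem_univ i), sdiff_singleton_eq_erase,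
    ← add_sum_erase _ _ (mem_univ i)]
  abel

lemma l1Norm_nonneg {d : ℕ} (x : Fin d → ℤ) : 0 ≤ l1Norm x :=
  sum_nonneg fun i _ => abs_nonneg (x i)

lemma l1Norm_eq_zero {d : ℕ} {x : Fin d → ℤ} : l1Norm x = 0 ↔ x = 0 := by
  simp [l1Norm, sum_eq_zero_iff_of_nonneg, funext_iff]

lemma l1Norm_nbr {d : ℕ} (x : Fin d → ℤ) (i : Fin d) {e : ℤ} (he : e = 1 ∨ e = -1) :
    l1Norm (nbr x i e) = l1Norm x + 1 ∨ l1Norm (nbr x i e) = l1Norm x - 1 := by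
  rw [l1Norm, nbr, sum_abs_update, ← l1Norm]
  have := abs_cases (x i + e)
  have := abs_cases (x i)
  omega

lemma exists_l1Norm_nbr_eq_sub_one {d : ℕ} {x : Fin d → ℤ} (hx : x ≠ 0) :
    ∃ i e, (e = 1 ∨ e = -1) ∧ l1Norm (nbr x i e) = l1Norm x - 1 := by
  obtain ⟨i, hi : x i ≠ 0⟩ := Function.ne_iff.mp hx
  have key (e : ℤ) : l1Norm (nbr x i e) = l1Norm x - |x i| + |x i + e| := by
    rw [l1Norm, nbr, sum_abs_update, ← l1Norm]
  rcases lt_or_gt_of_ne hi with h | h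
  · refine ⟨i, 1, Or.inl rfl, ?_⟩
    rw [key, abs_of_neg h, abs_of_nonpos (by omega)]; ring
  · refine ⟨i, -1, Or.inr rfl, ?_⟩
    rw [key, abs_of_pos h, abs_of_nonneg (by omega)]; ring

lemma norm_le_sum_abs {ι : Type*} [Fintype ι] (v : EuclideanSpace ℝ ι) : ‖v‖ ≤ ∑ i, |v i| := by
  rw [EuclideanSpace.norm_eq, Real.sqrt_le_left (sum_nonneg fun i _ => abs_nonneg (v i))]
  simpa only [Real.norm_eq_abs, sq_abs] using
    sum_sq_le_sq_sum_of_nonneg (s := univ) fun i _ => abs_nonneg (v i)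

lemma infDist_compl_diamond_le {d : ℕ} (hd : 0 < d) (p : EuclideanSpace ℝ (Fin d)) {c : ℝ}
    (hc : 0 ≤ c) (hpc : 1 < ∑ i, |p i| + c) : Metric.infDist p (Diamond d)ᶜ ≤ c := by
  let i₀ : Fin d := ⟨0, hd⟩
  obtain ⟨b, hb, hbc⟩ : ∃ b, |p i₀ + b| = |p i₀| + c ∧ |b| = c := by
    rcases le_or_gt 0 (p i₀) with h | h
    · exact ⟨c, by rw [abs_of_nonneg h, abs_of_nonneg (by linarith)], abs_of_nonneg hc⟩
    · refine ⟨-c, ?_, by rw [abs_neg, abs_of_nonneg hc]⟩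
      rw [abs_of_neg h, abs_of_neg (by linarith)]
      ring
  set q := p + PiLp.single 2 i₀ b
  have hq : q.ofLp = Function.update p.ofLp i₀ (p i₀ + b) := by
    ext i
    by_cases hi : i = i₀
    · subst hi; simp [q]
    · simp [q, hi]
  have hqD : q ∈ (Diamond d)ᶜ := by
    simp only [Diamond, Set.mem_compl_iff, Set.mem_ofPred_eq, not_le, hq, sum_abs_update, hb]
    linarith
  calc Metric.infDist p (Diamond d)ᶜ ≤ dist p q := Metric.infDist_le_dist_of_mem hqD
    _ = c := by
        rw [dist_comm, dist_eq_norm, add_sub_cancel_left, PiLp.norm_single, Real.norm_eq_abs, hbc]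

lemma innerNbhd_diamond_subset_smul_cubes {d : ℕ} (hd : 0 < d) {ε R : ℝ} (hε : 0 < ε)
    (hR : 0 < R) (hdR : d < R * ε) {V : Set (Fin d → ℤ)}
    (hV : ∀ x, (l1Norm x : ℝ) < R → x ∈ V) : innerNbhd (Diamond d) ε ⊆ (1 / R) • cubes V := by
  rintro p ⟨-, hpε⟩
  have hp : ∑ i, |p i| + ε / 2 ≤ 1 := by
    by_contra! h
    linarith [infDist_compl_diamond_le hd p (by linarith) h]
  rw [Set.mem_smul_set_iff_inv_smul_mem₀ (by positivity), one_div, inv_inv]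
  refine ⟨fun i => round (R * p i), hV _ ?_, fun i => abs_sub_round _⟩
  have hround : ∀ i, |(round (R * p i) : ℝ)| ≤ R * |p i| + 1 / 2 := fun i => by
    have := abs_sub_abs_le_abs_sub (round (R * p i) : ℝ) (R * p i)
    rw [abs_sub_comm, abs_mul, abs_of_pos hR] at this
    linarith [abs_sub_round (R * p i)]
  calc (l1Norm (fun i => round (R * p i)) : ℝ) = ∑ i, |(round (R * p i) : ℝ)| := by
        simp [l1Norm]
    _ ≤ ∑ i, (R * |p i| + 1 / 2) := sum_le_sum fun i _ => hround i
    _ = R * ∑ i, |p i| + d / 2 := by simp [sum_add_distrib, mul_sum]; ring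
    _ < R := by nlinarith

lemma smul_cubes_subset_outerNbhd_diamond {d : ℕ} {ε R : ℝ} (hR : 0 < R) (hdR : d / 2 ≤ R * ε)
    {V : Set (Fin d → ℤ)} (hV : ∀ x ∈ V, (l1Norm x : ℝ) ≤ R) :
    (1 / R) • cubes V ⊆ outerNbhd (Diamond d) ε := by
  rintro _ ⟨q, ⟨x, hxV, hqx⟩, rfl⟩
  set y : EuclideanSpace ℝ (Fin d) := WithLp.toLp 2 fun i => (x i : ℝ)
  have hy : (1 / R) • y ∈ Diamond d := by
    show ∑ i, |(1 / R) * (x i : ℝ)| ≤ 1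
    have := hV x hxV
    simp only [l1Norm, Int.cast_sum, Int.cast_abs] at this
    simp_rw [abs_mul, abs_of_pos (one_div_pos.mpr hR), ← mul_sum]
    rwa [one_div_mul_eq_div, div_le_one hR]
  have hqy : ‖q - y‖ ≤ d / 2 := by
    calc ‖q - y‖ ≤ ∑ i, |q i - x i| := norm_le_sum_abs _
      _ ≤ ∑ _i : Fin d, (1 / 2 : ℝ) := sum_le_sum fun i _ => hqx i
      _ = d / 2 := by simp; ring
  calc Metric.infDist ((1 / R) • q) (Diamond d) ≤ dist ((1 / R) • q) ((1 / R) • y) :=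
        Metric.infDist_le_dist_of_mem hy
    _ = ‖q - y‖ / R := by
        rw [dist_smul₀, dist_eq_norm, Real.norm_of_nonneg (by positivity)]; ring
    _ ≤ ε := by rw [div_le_iff₀ hR]; linarith

def parityBall {d : ℕ} (t : ℕ) : Set (Fin d → ℤ) :=
  {x | l1Norm x ≤ t ∧ l1Norm x % 2 = t % 2}

namespace SplittingModel

variable {d : ℕ} {n h : ℝ} (M : SplittingModel d n h)

noncomputable def neighborMass (t : ℕ) (x : Fin d → ℤ) : ℝ :=
  ∑ i : Fin d, ((M.S (t + 1)).indicator (M.η t) (nbr x i 1)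
    + (M.S (t + 1)).indicator (M.η t) (nbr x i (-1)))

lemma eta_succ (t : ℕ) (x : Fin d → ℤ) :
    M.η (t + 1) x = (M.S (t + 1))ᶜ.indicator (M.η t) x + 1 / (2 * d) * M.neighborMass t x :=
  M.evolve t x

lemma indicator_nonneg (t : ℕ) (y : Fin d → ℤ) : 0 ≤ (M.S (t + 1)).indicator (M.η t) y :=
  Set.indicator_nonneg (fun _ hy => zero_le_one.trans (M.S_subset t hy)) y

lemma one_le_indicator {t : ℕ} {y : Fin d → ℤ} (hy : y ∈ M.S (t + 1)) :
    1 ≤ (M.S (t + 1)).indicator (M.η t) y := by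
  rw [Set.indicator_of_mem hy]
  exact M.S_subset t hy

lemma neighborMass_eq_zero {t : ℕ} {x : Fin d → ℤ}
    (hx : ∀ i e, (e = 1 ∨ e = -1) → nbr x i e ∉ M.S (t + 1)) : M.neighborMass t x = 0 :=
  sum_eq_zero fun i _ => by
    rw [Set.indicator_of_notMem (hx i 1 (.inl rfl)),
      Set.indicator_of_notMem (hx i (-1) (.inr rfl)), add_zero]

lemma one_le_neighborMass {t : ℕ} {x : Fin d → ℤ} {i : Fin d} {e : ℤ} (he : e = 1 ∨ e = -1)
    (hx : nbr x i e ∈ M.S (t + 1)) : 1 ≤ M.neighborMass t x := by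
  have hpair : 1 ≤ (M.S (t + 1)).indicator (M.η t) (nbr x i 1)
      + (M.S (t + 1)).indicator (M.η t) (nbr x i (-1)) := by
    have := M.one_le_indicator hx
    rcases he with rfl | rfl
    · linarith [M.indicator_nonneg t (nbr x i (-1))]
    · linarith [M.indicator_nonneg t (nbr x i 1)]
  exact hpair.trans <| single_le_sum
    (f := fun j => (M.S (t + 1)).indicator (M.η t) (nbr x j 1)
      + (M.S (t + 1)).indicator (M.η t) (nbr x j (-1)))
    (fun j _ => add_nonneg (M.indicator_nonneg t _) (M.indicator_nonneg t _)) (mem_univ i)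

lemma two_mul_le_neighborMass {t : ℕ} {x : Fin d → ℤ}
    (hx : ∀ i e, (e = 1 ∨ e = -1) → nbr x i e ∈ M.S (t + 1)) : 2 * d ≤ M.neighborMass t x :=
  calc (2 * d : ℝ) = ∑ _i : Fin d, (1 + 1 : ℝ) := by simp; ring
    _ ≤ M.neighborMass t x := sum_le_sum fun i _ =>
        add_le_add (M.one_le_indicator (hx i 1 (.inl rfl)))
          (M.one_le_indicator (hx i (-1) (.inr rfl)))

structure HasDiamondProfile (t : ℕ) : Prop where
  eq_background : ∀ x, t < l1Norm x → M.η t x = h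
  one_le : ∀ x ∈ parityBall t, 1 ≤ M.η t x
  eq_zero : ∀ x, l1Norm x ≤ t → x ∉ parityBall t → M.η t x = 0

variable {M}

lemma HasDiamondProfile.S_succ_eq (hM : M.Parallel) (hh : h < 1) {t : ℕ}
    (hP : M.HasDiamondProfile t) : M.S (t + 1) = parityBall t := by
  ext x
  rw [hM t, Set.mem_ofPred_eq]
  refine ⟨fun hx => ?_, hP.one_le x⟩
  by_contra hxt
  rcases lt_or_ge (t : ℤ) (l1Norm x) with hlt | hle
  · linarith [hP.eq_background x hlt]
  · linarith [hP.eq_zero x hle hxt]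

lemma eta_succ_eq_background {t : ℕ} (hS : M.S (t + 1) = parityBall t)
    (hP : M.HasDiamondProfile t) {x : Fin d → ℤ} (hx : t + 1 < l1Norm x) :
    M.η (t + 1) x = h := by
  have hxS : x ∉ M.S (t + 1) := fun h' => by rw [hS] at h'; have := h'.1; omega
  rw [eta_succ, Set.indicator_of_mem hxS, hP.eq_background x (by omega), neighborMass_eq_zero,
    mul_zero, add_zero]
  intro i e he h'
  rw [hS] at h'
  have := h'.1
  rcases l1Norm_nbr x i he with h'' | h'' <;> omega

lemma eta_succ_eq_zero {t : ℕ} (hS : M.S (t + 1) = parityBall t)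
    {x : Fin d → ℤ} (hx : l1Norm x ≤ t + 1) (hxt : x ∉ parityBall (t + 1)) :
    M.η (t + 1) x = 0 := by
  have hxS : x ∈ M.S (t + 1) := by
    rw [hS]; simp only [parityBall, Set.mem_ofPred_eq, not_and] at hxt ⊢; omega
  rw [eta_succ, Set.indicator_of_notMem (by simpa using hxS), neighborMass_eq_zero, mul_zero,
    add_zero]
  intro i e he h'
  rw [hS] at h' hxS
  have := h'.2
  have := hxS.2
  rcases l1Norm_nbr x i he with h'' | h'' <;> omega

lemma one_le_eta_succ (hd : 0 < d) (hh : 1 - 1 / (2 * (d : ℝ)) ≤ h) {t : ℕ}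
    (hS : M.S (t + 1) = parityBall t) (hP : M.HasDiamondProfile t) {x : Fin d → ℤ}
    (hx : x ∈ parityBall (t + 1)) : 1 ≤ M.η (t + 1) x := by
  obtain ⟨hxle, hxpar⟩ := hx
  push_cast at hxpar
  have hxS : x ∉ M.S (t + 1) := fun h' => by rw [hS] at h'; have := h'.2; omega
  rw [eta_succ, Set.indicator_of_mem hxS]
  rcases eq_or_lt_of_le hxle with hxeq | hxlt
  · -- on the sphere the background mass `h ≥ 1 - 1/(2d)` plus one share from an inner neighbour
    -- already reaches `1`
    have hx0 : x ≠ 0 := mt l1Norm_eq_zero.mpr (by omega)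
    obtain ⟨i, e, he, hie⟩ := exists_l1Norm_nbr_eq_sub_one hx0
    have := M.one_le_neighborMass he (hS ▸ ⟨by omega, by omega⟩ : nbr x i e ∈ M.S (t + 1))
    have : 0 < 1 / (2 * (d : ℝ)) := by positivity
    rw [hP.eq_background x (by omega)]
    nlinarith
  · have := M.two_mul_le_neighborMass (t := t) (x := x) fun i e he => by
      rw [hS]
      rcases l1Norm_nbr x i he with h'' | h'' <;> exact ⟨by omega, by omega⟩
    rw [hP.eq_zero x (by omega) fun h' => by have := h'.2; omega]
    have hd' : (0 : ℝ) < d := by exact_mod_cast hd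
    rw [zero_add, div_mul_eq_mul_div, one_mul, le_div_iff₀ (by positivity)]
    linarith

lemma hasDiamondProfile_zero (hn : 1 ≤ n) : M.HasDiamondProfile 0 where
  eq_background x hx := M.init_other x <| mt l1Norm_eq_zero.mpr (by omega)
  one_le x hx := by
    obtain rfl : x = 0 := l1Norm_eq_zero.mp (by have := l1Norm_nonneg x; have := hx.1; omega)
    rw [M.init_origin]
    exact hn
  eq_zero x hx hxt := absurd ⟨hx, by have := l1Norm_nonneg x; omega⟩ hxt

lemma hasDiamondProfile (hd : 0 < d) (hh₁ : 1 - 1 / (2 * (d : ℝ)) ≤ h) (hh₂ : h < 1)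
    (hn : 1 ≤ n) (hM : M.Parallel) (t : ℕ) : M.HasDiamondProfile t := by
  induction t with
  | zero => exact hasDiamondProfile_zero hn
  | succ t hP =>
    have hS := hP.S_succ_eq hM hh₂
    exact ⟨fun _ => eta_succ_eq_background hS hP, fun _ => one_le_eta_succ hd hh₁ hS hP,
      fun _ => eta_succ_eq_zero hS⟩

lemma mem_Tt_iff (hd : 0 < d) (hh₁ : 1 - 1 / (2 * (d : ℝ)) ≤ h) (hh₂ : h < 1) (hn : 1 ≤ n)
    (hM : M.Parallel) {t : ℕ} {x : Fin d → ℤ} : x ∈ M.Tt t ↔ l1Norm x < t := by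
  have hS s := (hasDiamondProfile hd hh₁ hh₂ hn hM s).S_succ_eq hM hh₂
  simp only [Tt, Set.mem_iUnion, Set.mem_Icc, exists_prop]
  constructor
  · rintro ⟨_ | s, ⟨hs, hst⟩, hx⟩
    · omega
    · rw [hS] at hx; have := hx.1; omega
  · intro hx
    have := l1Norm_nonneg x
    refine ⟨(l1Norm x).toNat + 1, by omega, ?_⟩
    rw [hS]; exact ⟨by omega, by omega⟩

end SplittingModel

/-- For the splitting automaton on `ℤ^d` with background `1 - 1/(2d) ≤ h < 1` and
initial mass `n ≥ 1`, the diamond `D` is the limiting shape of the sets `T_t`,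
with scaling function `f t = 1/t`. -/
theorem diamond_limiting_shape {d : ℕ} (hd : 1 ≤ d) {n h : ℝ}
    (hh1 : 1 - 1 / (2 * (d : ℝ)) ≤ h) (hh2 : h < 1) (hn : 1 ≤ n)
    (M : SplittingModel d n h) (hM : M.Parallel) :
    ∀ ε : ℝ, 0 < ε → ∃ tε : ℕ, ∀ t : ℕ, tε < t →
      innerNbhd (Diamond d) ε ⊆ (1 / (t : ℝ)) • cubes (M.Tt t) ∧
        (1 / (t : ℝ)) • cubes (M.Tt t) ⊆ outerNbhd (Diamond d) ε := by
  intro ε hε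
  refine ⟨⌈d / ε⌉₊, fun t ht => ?_⟩
  have hdt : (d : ℝ) < t * ε := (div_lt_iff₀ hε).mp (Nat.lt_of_ceil_lt ht)
  have htpos : (0 : ℝ) < t := by exact_mod_cast (Nat.zero_le _).trans_lt ht
  have hTt (x : Fin d → ℤ) : x ∈ M.Tt t ↔ (l1Norm x : ℝ) < t := by
    rw [M.mem_Tt_iff hd hh1 hh2 hn hM]
    exact_mod_cast Iff.rfl
  exact ⟨innerNbhd_diamond_subset_smul_cubes hd hε htpos hdt fun x => (hTt x).mpr,
    smul_cubes_subset_outerNbhd_diamond htpos (by linarith [d.cast_nonneg (α := ℝ)])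
      fun x hx => ((hTt x).mp hx).le⟩
end

section
/- Consider the splitting model on Z^d (d ≥ 1) with any valid splitting order, background 1 − 1/(2d) ≤ h < 1 and initial mass n ≥ 1. Then the set T of sites that split at least once is infinite. (In particular, T cannot be a finite nonempty set: any site outside a finite nonempty T adjacent to T would receive mass at least 1/(2d), hence become unstable and have to split.) -/
open scoped BigOperators

/-!
A site that never splits keeps at least its initial mass, and each split of a neighbour adds at
least `1/(2d)` of a mass `≥ 1` to it. With background `h ≥ 1 - 1/(2d)` a neighbour of a split site
therefore becomes unstable and must itself split, so `T` is closed under the shift `x ↦ x + eᵢ`.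
Since the origin splits, `T` is nonempty, and a finite nonempty subset of `ℤ^d` contains a point
maximal in the first coordinate, whose shift leaves it.
-/

lemma nbr_nbr_neg {d : ℕ} (x : Fin d → ℤ) (i : Fin d) (ε : ℤ) :
    nbr (nbr x i ε) i (-ε) = x := by
  simp [nbr]

lemma Set.Finite.exists_nbr_notMem {d : ℕ} {s : Set (Fin d → ℤ)} (hs : s.Finite)
    (hne : s.Nonempty) (i : Fin d) : ∃ x ∈ s, nbr x i 1 ∉ s := by
  obtain ⟨x, hx, hmax⟩ := hs.exists_maximalFor (fun z => z i) s hne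
  refine ⟨x, hx, fun hy => ?_⟩
  have hxy : x i + 1 ≤ x i := by
    simpa [nbr] using hmax hy (by simp [nbr])
  omega

namespace SplittingModel

variable {d : ℕ} {n h : ℝ} (M : SplittingModel d n h)

lemma indicator_split_nonneg (t : ℕ) (z : Fin d → ℤ) :
    0 ≤ (M.S (t + 1)).indicator (M.η t) z :=
  Set.indicator_nonneg (fun _ hz => zero_le_one.trans (M.S_subset t hz)) z

lemma eta_le_eta_succ_of_notMem {t : ℕ} {y : Fin d → ℤ} (hy : y ∉ M.S (t + 1)) :
    M.η t y ≤ M.η (t + 1) y := by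
  rw [M.evolve t y, Set.indicator_of_mem (show y ∈ (M.S (t + 1))ᶜ from hy)]
  refine le_add_of_nonneg_right (mul_nonneg (by positivity) (Finset.sum_nonneg fun _ _ => ?_))
  exact add_nonneg (M.indicator_split_nonneg t _) (M.indicator_split_nonneg t _)

lemma eta_add_le_eta_succ_of_nbr_mem {t : ℕ} {y : Fin d → ℤ} {i : Fin d}
    (hy : y ∉ M.S (t + 1)) (hx : nbr y i (-1) ∈ M.S (t + 1)) :
    M.η t y + 1 / (2 * d) ≤ M.η (t + 1) y := by
  rw [M.evolve t y, Set.indicator_of_mem (show y ∈ (M.S (t + 1))ᶜ from hy)]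
  set inflow : Fin d → ℝ := fun j => (M.S (t + 1)).indicator (M.η t) (nbr y j 1)
    + (M.S (t + 1)).indicator (M.η t) (nbr y j (-1))
  have hinflow_nonneg (j : Fin d) : 0 ≤ inflow j :=
    add_nonneg (M.indicator_split_nonneg t _) (M.indicator_split_nonneg t _)
  have hi : 1 ≤ inflow i := by
    have : 1 ≤ M.η t (nbr y i (-1)) := M.S_subset t hx
    have := M.indicator_split_nonneg t (nbr y i 1)
    simp only [inflow, Set.indicator_of_mem hx]
    linarith
  have hsum : 1 ≤ ∑ j, inflow j :=
    hi.trans (Finset.single_le_sum (fun j _ => hinflow_nonneg j) (Finset.mem_univ i))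
  have : 1 / (2 * (d : ℝ)) * 1 ≤ 1 / (2 * d) * ∑ j, inflow j :=
    mul_le_mul_of_nonneg_left hsum (by positivity)
  linarith

lemma exists_mem_S_succ_of_mem_T {x : Fin d → ℤ} (hx : x ∈ M.T) : ∃ t, x ∈ M.S (t + 1) := by
  obtain ⟨t, hxt⟩ := Set.mem_iUnion.1 hx
  cases t with
  | zero => simp [M.S_zero] at hxt
  | succ t => exact ⟨t, hxt⟩

lemma eta_zero_le_eta_of_notMem_T {y : Fin d → ℤ} (hy : y ∉ M.T) (t : ℕ) :
    M.η 0 y ≤ M.η t y := by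
  induction t with
  | zero => rfl
  | succ t ih =>
    exact ih.trans (M.eta_le_eta_succ_of_notMem fun hyt => hy (Set.mem_iUnion.2 ⟨t + 1, hyt⟩))

variable {M}

lemma Valid.mem_T_of_one_le_eta (hM : M.Valid) {t : ℕ} {x : Fin d → ℤ} (hx : 1 ≤ M.η t x) :
    x ∈ M.T := by
  obtain ⟨t₀, -, hxS⟩ := hM.2 t x hx
  exact Set.mem_iUnion.2 ⟨t + t₀, hxS⟩

lemma Valid.zero_mem_T (hM : M.Valid) (hn : 1 ≤ n) : 0 ∈ M.T :=
  hM.mem_T_of_one_le_eta (t := 0) (by rwa [M.init_origin])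

lemma Valid.nbr_mem_T (hM : M.Valid) (hn : 1 ≤ n) (hh : 1 - 1 / (2 * (d : ℝ)) ≤ h)
    {x : Fin d → ℤ} (hx : x ∈ M.T) (i : Fin d) : nbr x i 1 ∈ M.T := by
  set y := nbr x i 1
  by_cases hy0 : y = 0
  · exact hy0 ▸ hM.zero_mem_T hn
  by_contra hyT
  obtain ⟨t, hxS⟩ := M.exists_mem_S_succ_of_mem_T hx
  have hbackground : h ≤ M.η t y := by
    simpa only [M.init_other y hy0] using M.eta_zero_le_eta_of_notMem_T hyT t
  have hgain := M.eta_add_le_eta_succ_of_nbr_mem (t := t) (i := i)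
    (fun hyS => hyT (Set.mem_iUnion.2 ⟨t + 1, hyS⟩)) (by rwa [nbr_nbr_neg])
  exact hyT (hM.mem_T_of_one_le_eta (t := t + 1) (by linarith))

end SplittingModel

theorem T_infinite_general {d : ℕ} (hd : 1 ≤ d) {n h : ℝ}
    (hh1 : 1 - 1 / (2 * (d : ℝ)) ≤ h) (hn : 1 ≤ n)
    (M : SplittingModel d n h) (hM : M.Valid) :
    M.T.Infinite := by
  intro hfin
  obtain ⟨x, hx, hnbr⟩ := hfin.exists_nbr_notMem ⟨0, hM.zero_mem_T hn⟩ ⟨0, hd⟩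
  exact hnbr (hM.nbr_mem_T hn hh1 hx _)

/-- For the splitting model on `ℤ^d` with any valid splitting order, background
`1 - 1/(2d) ≤ h < 1` and initial mass `n ≥ 1`, the set `T` of sites that split at
least once is infinite. -/
theorem T_infinite {d : ℕ} (hd : 1 ≤ d) {n h : ℝ}
    (hh1 : 1 - 1 / (2 * (d : ℝ)) ≤ h) (hh2 : h < 1) (hn : 1 ≤ n)
    (M : SplittingModel d n h) (hM : M.Valid) :
    M.T.Infinite :=
  T_infinite_general hd hh1 hn M hM
end

section
/- The splitting automaton is not monotone in the initial mass n: on Z (d = 1) with background h = 23/64, the splitting automaton started from η_n^h with n = 165/32 stabilizes with T = {−5, −4, …, 4, 5}, whereas started with n = 167/32 it stabilizes with T = {−4, −3, …, 3, 4}. In particular, increasing n can strictly decrease the set T of sites that split at least once. -/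
open scoped BigOperators

/-!
In dimension one the splitting automaton iterates a local rule on configurations `ℤ → ℝ`.
Started from `η_n^h` with `h < 1`, the configuration at time `t` equals `h` outside `[-t, t]`,
so for rational `n` and `h` it is encoded exactly by a list of `2t + 1` rationals. Once no site
is unstable the automaton is frozen, so it stabilizes and `T` consists of the sites unstable at
some earlier time. For `h = 23/64` the lists are evaluated in the kernel: with `n = 165/32` no
site is unstable at time 15, with `n = 167/32` none is at time 9, and the sites unstable before
those times are read off.
-/

namespace SplittingModel

variable {d : ℕ} {n h : ℝ} {M : SplittingModel d n h}

theorem η_succ_of_S_succ_eq_empty {t : ℕ} (hS : M.S (t + 1) = ∅) : M.η (t + 1) = M.η t := by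
  funext x
  simp [M.evolve, hS]

namespace Parallel

theorem S_succ_eq_empty (hP : M.Parallel) {t : ℕ} (hst : ∀ x, M.η t x < 1) :
    M.S (t + 1) = ∅ := by
  rw [hP]
  exact Set.eq_empty_of_forall_notMem fun x hx => (hst x).not_ge hx

theorem stable_of_le (hP : M.Parallel) {t₀ : ℕ} (hst : ∀ x, M.η t₀ x < 1) {t : ℕ}
    (ht : t₀ ≤ t) : ∀ x, M.η t x < 1 := by
  induction t, ht using Nat.le_induction with
  | base => exact hst
  | succ t _ ih => rwa [η_succ_of_S_succ_eq_empty (hP.S_succ_eq_empty ih)]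

theorem S_eq_empty_of_lt (hP : M.Parallel) {t₀ : ℕ} (hst : ∀ x, M.η t₀ x < 1) {t : ℕ}
    (ht : t₀ < t) : M.S t = ∅ := by
  obtain ⟨s, rfl⟩ := Nat.exists_eq_add_one_of_ne_zero (Nat.ne_zero_of_lt ht)
  exact hP.S_succ_eq_empty (hP.stable_of_le hst (Nat.le_of_lt_succ ht))

theorem stabilizes_of_stable (hP : M.Parallel) {t₀ : ℕ} (hst : ∀ x, M.η t₀ x < 1) :
    M.Stabilizes := fun x =>
  (Set.finite_Iic t₀).subset fun t hx =>
    Set.mem_Iic.2 <| not_lt.1 fun ht => by simp [hP.S_eq_empty_of_lt hst ht] at hx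

theorem T_eq_of_stable (hP : M.Parallel) {t₀ : ℕ} (hst : ∀ x, M.η t₀ x < 1) :
    M.T = {x | ∃ t < t₀, 1 ≤ M.η t x} := by
  ext x
  simp only [T, Set.mem_iUnion]
  constructor
  · rintro ⟨_ | t, hx⟩
    · simp [M.S_zero] at hx
    · refine ⟨t, lt_of_not_ge fun ht => ?_, by rwa [hP] at hx⟩
      simp [hP.S_eq_empty_of_lt hst (Nat.lt_succ_of_le ht)] at hx
  · rintro ⟨t, -, hx⟩
    exact ⟨t + 1, by rwa [hP]⟩

end Parallel

end SplittingModel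

section Window

variable {K : Type*} {h : K} {r : ℤ} {L : List K} {z : ℤ}

/-- The configuration with value `L[i]` at site `i - r` and `h` everywhere else. -/
def window (h : K) (r : ℤ) (L : List K) (z : ℤ) : K :=
  if 0 ≤ z + r then L.getD (z + r).toNat h else h

theorem window_eq_background (hz : z + r < 0 ∨ L.length ≤ z + r) : window h r L z = h := by
  unfold window
  split_ifs
  · exact List.getD_eq_default _ _ (by omega)
  · rfl

theorem window_eq_or_mem : window h r L z = h ∨ window h r L z ∈ L := by
  unfold window
  split_ifs
  · rcases lt_or_ge (z + r).toNat L.length with hlt | hge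
    · exact .inr (List.getD_eq_getElem _ _ hlt ▸ List.getElem_mem hlt)
    · exact .inl (List.getD_eq_default _ _ hge)
  · exact .inl rfl

theorem window_shift (s : ℤ) : window h r L z = window h s L (z + r - s) := by
  simp [window]

theorem window_map {K' : Type*} (f : K → K') :
    window (f h) r (L.map f) z = f (window h r L z) := by
  unfold window
  split_ifs
  · exact List.getD_map ..
  · rfl

end Window

section SplitStep

variable {K : Type*} [Field K] [LinearOrder K]

def splitRule (a b c : K) : K :=
  (if 1 ≤ b then 0 else b) + ((if 1 ≤ a then a else 0) + (if 1 ≤ c then c else 0)) / 2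

def splitStep (f : ℤ → K) (z : ℤ) : K :=
  splitRule (f (z - 1)) (f z) (f (z + 1))

def windowStep (h : K) (L : List K) : List K :=
  (List.range (L.length + 2)).map fun j : ℕ => splitStep (window h (-1) L) j

def windows (h n : K) (t : ℕ) : List K :=
  (windowStep h)^[t] [n]

noncomputable def toppled (h n : K) (t₀ : ℕ) : Finset ℤ :=
  (Finset.range t₀).biUnion fun t =>
    (Finset.Icc (-(t : ℤ)) t).filter fun z => 1 ≤ window h t (windows h n t) z

variable {h : K} {r : ℤ} {L : List K}

theorem splitRule_self (hh : h < 1) : splitRule h h h = h := by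
  simp [splitRule, hh.not_ge]

theorem length_windowStep : (windowStep h L).length = L.length + 2 := by
  simp [windowStep]

theorem splitStep_window (hh : h < 1) :
    splitStep (window h r L) = window h (r + 1) (windowStep h L) := by
  funext z
  by_cases hz : 0 ≤ z + (r + 1) ∧ z + (r + 1) < L.length + 2
  · have hj : (z + (r + 1)).toNat < L.length + 2 := by omega
    rw [window, if_pos hz.1, windowStep, List.getD_eq_getElem?_getD, List.getElem?_map,
      List.getElem?_range hj, Option.map_some, Option.getD_some, Int.toNat_of_nonneg hz.1]
    simp only [splitStep]
    rw [window_shift (r := r) (z := z) (-1), window_shift (r := r) (z := z - 1) (-1),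
      window_shift (r := r) (z := z + 1) (-1)]
    ring_nf
  · rw [window_eq_background (by rw [length_windowStep]; omega)]
    simp only [splitStep]
    rw [window_eq_background (by omega), window_eq_background (by omega),
      window_eq_background (by omega), splitRule_self hh]

theorem windows_succ (n : K) (t : ℕ) : windows h n (t + 1) = windowStep h (windows h n t) :=
  Function.iterate_succ_apply' ..

theorem length_windows (n : K) (t : ℕ) : (windows h n t).length = 2 * t + 1 := by
  induction t with
  | zero => rfl
  | succ t ih => rw [windows_succ, length_windowStep, ih]; ring

theorem splitStep_iterate_window (hh : h < 1) (n : K) (t : ℕ) :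
    splitStep^[t] (window h 0 [n]) = window h t (windows h n t) := by
  induction t with
  | zero => rfl
  | succ t ih =>
    rw [Function.iterate_succ_apply', ih, splitStep_window hh, windows_succ]
    push_cast
    rfl

theorem mem_Icc_of_one_le_window (hh : h < 1) {n : K} {t : ℕ} {z : ℤ}
    (hz : 1 ≤ window h t (windows h n t) z) : z ∈ Finset.Icc (-(t : ℤ)) t := by
  by_contra hout
  rw [Finset.mem_Icc] at hout
  rw [window_eq_background (by rw [length_windows]; omega)] at hz
  exact hh.not_ge hz

end SplitStep

section RatCast

variable {K : Type*} [Field K] [LinearOrder K] [IsStrictOrderedRing K]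

theorem splitRule_ratCast (a b c : ℚ) : splitRule (a : K) b c = ((splitRule a b c : ℚ) : K) := by
  simp only [splitRule]
  push_cast [apply_ite (Rat.cast : ℚ → K)]
  norm_cast

theorem splitStep_iterate_ratCast (t : ℕ) (f : ℤ → ℚ) :
    splitStep^[t] (fun z => (f z : K)) = fun z => ((splitStep^[t] f z : ℚ) : K) :=
  (Function.Semiconj.iterate_right (f := fun (g : ℤ → ℚ) z => (g z : K))
    (fun _ => funext fun _ => (splitRule_ratCast ..).symm) t f).symm

end RatCast

theorem SplittingModel.Parallel.η_eq_splitStep_iterate {n h : ℝ} {M : SplittingModel 1 n h}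
    (hP : M.Parallel) (t : ℕ) (x : Fin 1 → ℤ) :
    M.η t x = splitStep^[t] (window h 0 [n]) (x 0) := by
  induction t generalizing x with
  | zero =>
    by_cases hx : x = 0
    · subst hx
      simp [window, M.init_origin]
    · have hx0 : x 0 ≠ 0 := fun h0 => hx (funext fun i => by rwa [Fin.fin_one_eq_zero i])
      rw [M.init_other x hx, Function.iterate_zero_apply,
        window_eq_background (by simp only [List.length_singleton]; omega)]
  | succ t ih =>
    rw [M.evolve, hP, Function.iterate_succ_apply', Fin.sum_univ_one]
    simp only [Set.indicator_apply, Set.mem_compl_iff, Set.mem_ofPred_eq, ih, nbr,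
      Function.update_self, ← sub_eq_add_neg, splitStep, splitRule]
    split_ifs <;> ring

theorem SplittingModel.Parallel.stabilizes_and_T_eq_toppled {n h : ℝ}
    {M : SplittingModel 1 n h} (hP : M.Parallel) {p q : ℚ} (hh : h = p) (hn : n = q)
    (hp : p < 1) {t₀ : ℕ} (hstable : ∀ v ∈ windows p q t₀, v < 1) :
    M.Stabilizes ∧ M.T = {x | x 0 ∈ toppled p q t₀} := by
  subst hh hn
  have hη : ∀ t x, M.η t x = window p t (windows p q t) (x 0) := by
    intro t x
    have hinit : window (p : ℝ) 0 [(q : ℝ)] = fun z => ((window p 0 [q] z : ℚ) : ℝ) :=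
      funext fun z => window_map (L := [q]) (Rat.cast : ℚ → ℝ)
    rw [hP.η_eq_splitStep_iterate, hinit, splitStep_iterate_ratCast,
      splitStep_iterate_window hp]
  have hst : ∀ x, M.η t₀ x < 1 := fun x => by
    rw [hη]
    rcases window_eq_or_mem (h := p) (r := t₀) (L := windows p q t₀) (z := x 0) with he | hm
    · exact_mod_cast he ▸ hp
    · exact_mod_cast hstable _ hm
  have hunstable : ∀ t x, 1 ≤ M.η t x ↔ 1 ≤ window p t (windows p q t) (x 0) := fun t x => by
    rw [hη]
    norm_cast
  refine ⟨hP.stabilizes_of_stable hst, ?_⟩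
  rw [hP.T_eq_of_stable hst]
  ext x
  simp only [toppled, Set.mem_ofPred_eq, Finset.mem_biUnion, Finset.mem_filter, Finset.mem_range,
    hunstable]
  constructor
  · rintro ⟨t, ht, hx⟩
    exact ⟨t, ht, mem_Icc_of_one_le_window hp hx, hx⟩
  · rintro ⟨t, ht, -, hx⟩
    exact ⟨t, ht, hx⟩

/-- Non-monotonicity in `n` of the splitting automaton on `ℤ` with `h = 23/64`:
with `n = 165/32` it stabilizes with `T = {-5, …, 5}`, whereas with the larger mass
`n = 167/32` it stabilizes with the strictly smaller set `T = {-4, …, 4}`. -/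
theorem not_monotone_in_n
    (M₁ : SplittingModel 1 (165 / 32) (23 / 64)) (h₁ : M₁.Parallel)
    (M₂ : SplittingModel 1 (167 / 32) (23 / 64)) (h₂ : M₂.Parallel) :
    M₁.Stabilizes ∧ M₁.T = {x : Fin 1 → ℤ | |x 0| ≤ 5} ∧
      M₂.Stabilizes ∧ M₂.T = {x : Fin 1 → ℤ | |x 0| ≤ 4} ∧
      M₂.T ⊂ M₁.T := by
  obtain ⟨hs₁, hT₁⟩ := h₁.stabilizes_and_T_eq_toppled (p := 23 / 64) (q := 165 / 32) (t₀ := 15)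
    (by norm_num) (by norm_num) (by norm_num) (by decide +kernel)
  obtain ⟨hs₂, hT₂⟩ := h₂.stabilizes_and_T_eq_toppled (p := 23 / 64) (q := 167 / 32) (t₀ := 9)
    (by norm_num) (by norm_num) (by norm_num) (by decide +kernel)
  have htop₁ : toppled (23 / 64 : ℚ) (165 / 32) 15 = Finset.Icc (-5) 5 := by decide +kernel
  have htop₂ : toppled (23 / 64 : ℚ) (167 / 32) 9 = Finset.Icc (-4) 4 := by decide +kernel
  have hIcc (R : ℤ) : {x : Fin 1 → ℤ | x 0 ∈ Finset.Icc (-R) R} = {x | |x 0| ≤ R} := by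
    simp [abs_le]
  rw [htop₁, hIcc] at hT₁
  rw [htop₂, hIcc] at hT₂
  refine ⟨hs₁, hT₁, hs₂, hT₂, ?_⟩
  rw [hT₁, hT₂]
  refine ⟨fun x (hx : |x 0| ≤ 4) => hx.trans (by norm_num), fun hsub => ?_⟩
  have h5 : |(fun _ => 5 : Fin 1 → ℤ) 0| ≤ 4 := hsub (a := fun _ => 5) (by simp)
  norm_num at h5
end

section
/- Consider the splitting model on Z^d (d ≥ 1) with any valid splitting order, any h < 1 and n ≥ 0. If every site of Z^d splits at least once (T = Z^d), then every site splits infinitely often; in particular the model does not stabilize. -/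
open scoped BigOperators

/-!
Right after a split a site holds only what its splitting neighbours just sent it, at least
`1/(2d)` each, and while it does not split its mass grows by every further such gift. So after
its last split a site sees fewer than `2d` neighbour splits, or it would be unstable again. Hence
a neighbour of a finitely splitting site splits finitely often, and by connectivity of `ℤ^d`
either every site splits infinitely often or every site splits finitely often. In the second
case take a site `x` whose last split is earliest: each of its `2d` neighbours splits at its own
last split, which is no earlier, and these are `2d` neighbour splits from `x`'s last split on.
-/

open Finset

theorem forall_update_add_of_nbr_closed {d : ℕ} {P : (Fin d → ℤ) → Prop}
    (hstep : ∀ x i, P x → P (nbr x i 1) ∧ P (nbr x i (-1))) {x : Fin d → ℤ} (hx : P x)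
    (i : Fin d) (k : ℤ) : P (Function.update x i (x i + k)) := by
  induction k with
  | zero => simpa using hx
  | succ k ih =>
    simpa [nbr, add_assoc] using (hstep _ i ih).1
  | pred k ih =>
    simpa [nbr, sub_eq_add_neg, add_assoc] using (hstep _ i ih).2

theorem forall_of_nbr_closed {d : ℕ} {P : (Fin d → ℤ) → Prop}
    (hstep : ∀ x i, P x → P (nbr x i 1) ∧ P (nbr x i (-1))) {x₀ : Fin d → ℤ} (h₀ : P x₀)
    (y : Fin d → ℤ) : P y := by
  classical
  have key : ∀ s : Finset (Fin d), P fun j => if j ∈ s then y j else x₀ j := by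
    intro s
    induction s using Finset.induction_on with
    | empty => simpa using h₀
    | insert j s hj ih =>
      convert forall_update_add_of_nbr_closed hstep ih j (y j - x₀ j) using 1
      funext l
      by_cases hl : l = j
      · subst hl; simp [hj]
      · simp [hl]
  simpa using key univ

namespace SplittingModel

variable {d : ℕ} {n h : ℝ} (M : SplittingModel d n h)

noncomputable def splitNeighbors (s : ℕ) (x : Fin d → ℤ) : ℝ :=
  ∑ i, ∑ ε ∈ ({1, -1} : Finset ℤ), (M.S s).indicator 1 (nbr x i ε)

open scoped Classical in
noncomputable def nbrSplitCount (x : Fin d → ℤ) (I : Finset ℕ) : ℕ :=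
  ∑ i, ∑ ε ∈ ({1, -1} : Finset ℤ), #{s ∈ I | nbr x i ε ∈ M.S s}

/-- Junk value `0` if `x` splits infinitely often. -/
noncomputable def lastSplit (x : Fin d → ℤ) : ℕ :=
  sSup {t | x ∈ M.S t}

theorem pos_of_mem_S {s : ℕ} {x : Fin d → ℤ} (hx : x ∈ M.S s) : 0 < s := by
  rcases Nat.eq_zero_or_pos s with rfl | hs
  · simp [M.S_zero] at hx
  · exact hs

theorem splits_nonempty (hT : M.T = Set.univ) (x : Fin d → ℤ) :
    {t | x ∈ M.S t}.Nonempty := by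
  have hx : x ∈ M.T := hT ▸ Set.mem_univ x
  exact Set.mem_iUnion.mp hx

theorem lastSplit_mem {x : Fin d → ℤ} (hfin : {t | x ∈ M.S t}.Finite)
    (hne : {t | x ∈ M.S t}.Nonempty) : x ∈ M.S (M.lastSplit x) :=
  Nat.sSup_mem hne hfin.bddAbove

theorem le_lastSplit {x : Fin d → ℤ} (hfin : {t | x ∈ M.S t}.Finite) {s : ℕ}
    (hs : x ∈ M.S s) : s ≤ M.lastSplit x :=
  le_csSup hfin.bddAbove hs

theorem indicator_one_le_indicator_η (t : ℕ) (y : Fin d → ℤ) :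
    (M.S (t + 1)).indicator 1 y ≤ (M.S (t + 1)).indicator (M.η t) y :=
  Set.indicator_le_indicator' fun hy => M.S_subset t hy

theorem indicator_add_splitNeighbors_le (t : ℕ) (x : Fin d → ℤ) :
    (M.S (t + 1))ᶜ.indicator (M.η t) x + 1 / (2 * (d : ℝ)) * M.splitNeighbors (t + 1) x
      ≤ M.η (t + 1) x := by
  rw [M.evolve, splitNeighbors]
  gcongr with i
  rw [sum_pair (by norm_num)]
  exact add_le_add (M.indicator_one_le_indicator_η t _) (M.indicator_one_le_indicator_η t _)

theorem sum_splitNeighbors_le_mass {x : Fin d → ℤ} {m t : ℕ} (hm : x ∈ M.S m) (hmt : m ≤ t)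
    (hquiet : ∀ s, m < s → s ≤ t → x ∉ M.S s) :
    1 / (2 * (d : ℝ)) * ∑ s ∈ Icc m t, M.splitNeighbors s x ≤ M.η t x := by
  induction t, hmt using Nat.le_induction with
  | base =>
    obtain ⟨k, rfl⟩ := Nat.exists_eq_succ_of_ne_zero (M.pos_of_mem_S hm).ne'
    have hstep := M.indicator_add_splitNeighbors_le k x
    rw [Set.indicator_of_notMem (Set.notMem_compl_iff.mpr hm), zero_add] at hstep
    simpa using hstep
  | succ t hmt ih =>
    have hx : x ∈ (M.S (t + 1))ᶜ := hquiet (t + 1) (by omega) le_rfl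
    have hstep := M.indicator_add_splitNeighbors_le t x
    rw [Set.indicator_of_mem hx] at hstep
    rw [sum_Icc_succ_top (by omega), mul_add]
    linarith [ih fun s hs hst => hquiet s hs (by omega)]

theorem sum_splitNeighbors_eq (x : Fin d → ℤ) (I : Finset ℕ) :
    ∑ s ∈ I, M.splitNeighbors s x = M.nbrSplitCount x I := by
  classical
  simp only [splitNeighbors, nbrSplitCount, Nat.cast_sum, natCast_card_filter]
  rw [sum_comm]
  refine sum_congr rfl fun i _ => ?_
  rw [sum_comm]
  refine sum_congr rfl fun ε _ => sum_congr rfl fun s _ => ?_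
  simp [Set.indicator_apply]

theorem nbrSplitCount_empty (x : Fin d → ℤ) : M.nbrSplitCount x ∅ = 0 := by
  simp [nbrSplitCount]

open scoped Classical in
theorem card_filter_le_nbrSplitCount (x : Fin d → ℤ) (I : Finset ℕ) (i : Fin d) {ε : ℤ}
    (hε : ε ∈ ({1, -1} : Finset ℤ)) :
    #{s ∈ I | nbr x i ε ∈ M.S s} ≤ M.nbrSplitCount x I :=
  calc #{s ∈ I | nbr x i ε ∈ M.S s}
      ≤ ∑ ε' ∈ ({1, -1} : Finset ℤ), #{s ∈ I | nbr x i ε' ∈ M.S s} :=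
        single_le_sum (f := fun ε' => #{s ∈ I | nbr x i ε' ∈ M.S s})
          (fun _ _ => Nat.zero_le _) hε
    _ ≤ M.nbrSplitCount x I :=
        single_le_sum
          (f := fun i' => ∑ ε' ∈ ({1, -1} : Finset ℤ), #{s ∈ I | nbr x i' ε' ∈ M.S s})
          (fun _ _ => Nat.zero_le _) (mem_univ i)

/-- Otherwise the site would hold mass `≥ 1` after its last split and would have to split
again. -/
theorem nbrSplitCount_lt (hd : 0 < d) (hM : M.Valid) {x : Fin d → ℤ} {m : ℕ}
    (hm : x ∈ M.S m) (hlast : ∀ s, x ∈ M.S s → s ≤ m) (t : ℕ) :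
    M.nbrSplitCount x (Icc m t) < 2 * d := by
  rcases lt_or_ge t m with htm | hmt
  · rw [Icc_eq_empty_of_lt htm, nbrSplitCount_empty]
    omega
  by_contra! hcount
  have hmass := M.sum_splitNeighbors_le_mass hm hmt fun s hs _ hx => (hlast s hx).not_gt hs
  have hd' : (0 : ℝ) < 2 * d := by positivity
  have hunstable : 1 ≤ M.η t x := by
    rw [sum_splitNeighbors_eq] at hmass
    refine le_trans ?_ hmass
    rw [div_mul_eq_mul_div, one_mul, le_div_iff₀ hd', one_mul]
    exact_mod_cast hcount
  obtain ⟨t₀, ht₀, hsplit⟩ := hM.2 t x hunstable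
  have := hlast _ hsplit
  omega

theorem splits_finite_nbr (hd : 0 < d) (hM : M.Valid) {x : Fin d → ℤ}
    (hfin : {t | x ∈ M.S t}.Finite) (hne : {t | x ∈ M.S t}.Nonempty) (i : Fin d) {ε : ℤ}
    (hε : ε ∈ ({1, -1} : Finset ℤ)) : {t | nbr x i ε ∈ M.S t}.Finite := by
  classical
  by_contra hinf
  obtain ⟨G, hG, hcard⟩ :=
    (Set.Infinite.sdiff hinf (Set.finite_Iio (M.lastSplit x))).exists_subset_card_eq (2 * d)
  have hG_sub : G ⊆ {s ∈ Icc (M.lastSplit x) (G.sup id) | nbr x i ε ∈ M.S s} := fun s hs =>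
    mem_filter.2 ⟨mem_Icc.2 ⟨not_lt.1 (hG hs).2, le_sup (f := id) hs⟩, (hG hs).1⟩
  have hlt := M.nbrSplitCount_lt hd hM (M.lastSplit_mem hfin hne)
    (fun s => M.le_lastSplit hfin) (G.sup id)
  have := (card_le_card hG_sub).trans (M.card_filter_le_nbrSplitCount x _ i hε)
  omega

theorem splits_finite_of_finite (hd : 0 < d) (hM : M.Valid) (hT : M.T = Set.univ)
    {x₀ : Fin d → ℤ} (h₀ : {t | x₀ ∈ M.S t}.Finite) (y : Fin d → ℤ) :
    {t | y ∈ M.S t}.Finite :=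
  forall_of_nbr_closed (P := fun x => {t | x ∈ M.S t}.Finite)
    (fun x i hx => ⟨M.splits_finite_nbr hd hM hx (M.splits_nonempty hT x) i (by simp),
      M.splits_finite_nbr hd hM hx (M.splits_nonempty hT x) i (by simp)⟩) h₀ y

theorem not_forall_splits_finite (hd : 0 < d) (hM : M.Valid) (hT : M.T = Set.univ)
    (hall : ∀ x, {t | x ∈ M.S t}.Finite) : False := by
  classical
  have hmem := fun x => M.lastSplit_mem (hall x) (M.splits_nonempty hT x)
  set x₀ := Function.argmin M.lastSplit
  set t := univ.sup fun i => ({1, -1} : Finset ℤ).sup fun ε => M.lastSplit (nbr x₀ i ε)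
  have hslot : ∀ i, ∀ ε ∈ ({1, -1} : Finset ℤ),
      1 ≤ #{s ∈ Icc (M.lastSplit x₀) t | nbr x₀ i ε ∈ M.S s} := by
    intro i ε hε
    have hle : M.lastSplit (nbr x₀ i ε) ≤ t :=
      le_sup_of_le (mem_univ i) (le_sup (f := fun ε => M.lastSplit (nbr x₀ i ε)) hε)
    exact card_pos.2 ⟨_, mem_filter.2 ⟨mem_Icc.2 ⟨Function.argmin_le _ _, hle⟩, hmem _⟩⟩
  have hcount : 2 * d ≤ M.nbrSplitCount x₀ (Icc (M.lastSplit x₀) t) := by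
    calc 2 * d = ∑ _i : Fin d, ∑ _ε ∈ ({1, -1} : Finset ℤ), 1 := by simp [mul_comm]
      _ ≤ _ := sum_le_sum fun i _ => sum_le_sum fun ε hε => hslot i ε hε
  exact (M.nbrSplitCount_lt hd hM (hmem x₀) (fun s => M.le_lastSplit (hall x₀)) t).not_ge hcount

end SplittingModel

theorem all_split_implies_infinite_general {d : ℕ} (hd : 1 ≤ d) {n h : ℝ}
    (M : SplittingModel d n h) (hM : M.Valid) (hT : M.T = Set.univ) :
    (∀ x : Fin d → ℤ, {t | x ∈ M.S t}.Infinite) ∧ ¬ M.Stabilizes := by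
  have hinf : ∀ x : Fin d → ℤ, {t | x ∈ M.S t}.Infinite := fun x hfin =>
    M.not_forall_splits_finite hd hM hT (M.splits_finite_of_finite hd hM hT hfin)
  exact ⟨hinf, fun hstab => hinf 0 (hstab 0)⟩

/-- For the splitting model on `ℤ^d` with any valid splitting order, `h < 1`,
`n ≥ 0`: if every site splits at least once (`T = ℤ^d`), then every site splits
infinitely often; in particular the model does not stabilize. -/
theorem all_split_implies_infinite {d : ℕ} (hd : 1 ≤ d) {n h : ℝ}
    (hh : h < 1) (hn : 0 ≤ n)
    (M : SplittingModel d n h) (hM : M.Valid) (hT : M.T = Set.univ) :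
    (∀ x : Fin d → ℤ, {t | x ∈ M.S t}.Infinite) ∧ ¬ M.Stabilizes :=
  all_split_implies_infinite_general hd M hM hT
end
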